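/- arXiv:cs/0610137 — 6 statements merged into one kernel-verified Lean document; each statement's English description precedes it below -/
import Mathlib

section
/- If δ =_σ δ' and both logs are consistent with σ (i.e. R(δ) ⊆ σ and R(δ') ⊆ σ), then W(δ) ⊎ (R(δ') \ R(δ)) = W(δ') ⊎ (R(δ) \ R(δ')). -/
/-- Actions: reads and writes of names. -/
inductive Act (N : Type*) where
  | rd (a : N)
  | wt (a : N)

/-- Multiset of names written in a log. -/
def Wl {N : Type*} : List (Act N) → Multiset N
  | [] => 0
  | .wt a :: δ => Wl δ + {a}
  | .rd _ :: δ => Wl δ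

/-- Multiset of names read in a log. -/
def Rl {N : Type*} : List (Act N) → Multiset N
  | [] => 0
  | .rd a :: δ => Rl δ + {a}
  | .wt _ :: δ => Rl δ

/-- Atomic expressions. -/
inductive Expr (N : Type*) where
  | done
  | retry
  | rd (a : N) (M : Expr N)
  | wt (a : N) (M : Expr N)
  | orElse (M₁ M₂ : Expr N)

/-- Ongoing atomic expressions. -/
inductive Ong (N : Type*) where
  | block (M : Expr N) (σ : Multiset N) (δ : List (Act N))
  | orElse (A B : Ong N)

/-- One-step reduction of ongoing expressions. -/
inductive Step {N : Type*} : Ong N → Ong N → Prop where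
  | rdOk {a : N} {M σ δ} (h : Rl δ + {a} ≤ σ) :
      Step (.block (.rd a M) σ δ) (.block M σ (δ ++ [.rd a]))
  | rdFail {a : N} {M σ δ} (h : ¬ Rl δ + {a} ≤ σ) :
      Step (.block (.rd a M) σ δ) (.block .retry σ δ)
  | wr {a : N} {M σ δ} :
      Step (.block (.wt a M) σ δ) (.block M σ (δ ++ [.wt a]))
  | orE {M₁ M₂ : Expr N} {σ δ} :
      Step (.block (.orElse M₁ M₂) σ δ) (.orElse (.block M₁ σ δ) (.block M₂ σ δ))
  | orFail {σ : Multiset N} {δ B} : Step (.orElse (.block .retry σ δ) B) B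
  | orEnd {σ : Multiset N} {δ B} : Step (.orElse (.block .done σ δ) B) (.block .done σ δ)
  | congL {A A' B : Ong N} (h : Step A A') : Step (.orElse A B) (.orElse A' B)
  | congR {A B B' : Ong N} (h : Step B B') : Step (.orElse A B) (.orElse A B')

/-- Multi-step reduction. -/
def Steps {N : Type*} : Ong N → Ong N → Prop := Relation.ReflTransGen Step

/-- Logs with the same effect on state σ. -/
def EffEq {N : Type*} [DecidableEq N] (σ : Multiset N) (δ δ' : List (Act N)) : Prop :=
  σ - Rl δ + Wl δ = σ - Rl δ' + Wl δ'

/-- Weak atomic equivalence. -/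
def AEq {N : Type*} [DecidableEq N] (M M' : Expr N) : Prop :=
  ∀ σ : Multiset N,
    ((∃ δ, Steps (.block M σ []) (.block .retry σ δ)) ∧
     (∃ δ', Steps (.block M' σ []) (.block .retry σ δ'))) ∨
    (∃ δ δ', Steps (.block M σ []) (.block .done σ δ) ∧
             Steps (.block M' σ []) (.block .done σ δ') ∧ EffEq σ δ δ')

/-- Prefixing an action onto an expression. -/
def pre {N : Type*} : Act N → Expr N → Expr N
  | .rd a, M => .rd a M
  | .wt a, M => .wt a M

/-- The pure sequence expression α₁.….αₙ.end. -/
def seq {N : Type*} (K : List (Act N)) : Expr N := K.foldr pre .done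

/-- Right-nested orElse of a nonempty list of expressions. -/
def ors {N : Type*} : Expr N → List (Expr N) → Expr N
  | M, [] => M
  | M, M' :: rest => .orElse M (ors M' rest)

/-- If δ =_σ δ' and both logs are consistent with σ, then
W(δ) ⊎ (R(δ') \ R(δ)) = W(δ') ⊎ (R(δ) \ R(δ')). -/
theorem stmt3 {N : Type*} [DecidableEq N] (σ : Multiset N) (δ δ' : List (Act N))
    (heq : EffEq σ δ δ') (h : Rl δ ≤ σ) (h' : Rl δ' ≤ σ) :
    Wl δ + (Rl δ' - Rl δ) = Wl δ' + (Rl δ - Rl δ') := by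
  ext a
  have := congrArg (Multiset.count a) heq
  have hc := Multiset.count_le_of_le a h
  have hc' := Multiset.count_le_of_le a h'
  simp [EffEq, Multiset.count_sub] at *
  omega
end

section
/- The evaluation of an ongoing atomic expression terminates: there is no infinite reduction sequence of ongoing expressions A → A' → A'' → ⋯. Every ongoing expression reduces in finitely many steps to either ⟨retry⟩_{σ;δ} or ⟨end⟩_{σ;δ} for some log δ. -/
def esize {N : Type*} : Expr N → ℕ
  | .done => 0
  | .retry => 0
  | .rd _ M => esize M + 1
  | .wt _ M => esize M + 1
  | .orElse M₁ M₂ => esize M₁ + esize M₂ + 2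

def osize {N : Type*} : Ong N → ℕ
  | .block M _ _ => esize M
  | .orElse A B => osize A + osize B + 1

lemma step_mu {N : Type*} {A A' : Ong N} (h : Step A A') : osize A' < osize A := by
  induction h <;> simp [osize, esize] at * <;> omega

lemma progress {N : Type*} (A : Ong N) :
    (∃ σ δ, A = .block .retry σ δ) ∨ (∃ σ δ, A = .block .done σ δ) ∨ ∃ A', Step A A' := by
  induction A with
  | block M σ δ =>
    cases M with
    | done => exact .inr (.inl ⟨σ, δ, rfl⟩)
    | retry => exact .inl ⟨σ, δ, rfl⟩
    | rd a M =>
      right; right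
      by_cases h : Rl δ + {a} ≤ σ
      · exact ⟨_, Step.rdOk h⟩
      · exact ⟨_, Step.rdFail h⟩
    | wt a M => exact .inr (.inr ⟨_, Step.wr⟩)
    | orElse M₁ M₂ => exact .inr (.inr ⟨_, Step.orE⟩)
  | orElse A B ihA ihB =>
    right; right
    rcases ihA with ⟨σ, δ, rfl⟩ | ⟨σ, δ, rfl⟩ | ⟨A', h⟩
    · exact ⟨_, Step.orFail⟩
    · exact ⟨_, Step.orEnd⟩
    · exact ⟨_, Step.congL h⟩

lemma reach {N : Type*} : ∀ n (A : Ong N), osize A ≤ n →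
    (∃ σ δ, Steps A (.block .retry σ δ)) ∨ (∃ σ δ, Steps A (.block .done σ δ)) := by
  intro n
  induction n with
  | zero =>
    intro A h
    rcases progress A with ⟨σ, δ, rfl⟩ | ⟨σ, δ, rfl⟩ | ⟨A', hs⟩
    · exact .inl ⟨σ, δ, Relation.ReflTransGen.refl⟩
    · exact .inr ⟨σ, δ, Relation.ReflTransGen.refl⟩
    · exact absurd (step_mu hs) (by omega)
  | succ n ih =>
    intro A h
    rcases progress A with ⟨σ, δ, rfl⟩ | ⟨σ, δ, rfl⟩ | ⟨A', hs⟩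
    · exact .inl ⟨σ, δ, Relation.ReflTransGen.refl⟩
    · exact .inr ⟨σ, δ, Relation.ReflTransGen.refl⟩
    · have hlt := step_mu hs
      rcases ih A' (by omega) with ⟨σ, δ, h2⟩ | ⟨σ, δ, h2⟩
      · exact .inl ⟨σ, δ, Relation.ReflTransGen.head hs h2⟩
      · exact .inr ⟨σ, δ, Relation.ReflTransGen.head hs h2⟩

/-- Evaluation of ongoing atomic expressions terminates: no infinite reduction
sequence, and every ongoing expression reduces in finitely many steps to a
retry-state or an end-state. -/
theorem stmt4 {N : Type*} :
    (¬ ∃ f : ℕ → Ong N, ∀ n, Step (f n) (f (n + 1))) ∧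
    (∀ A : Ong N,
      (∃ σ δ, Steps A (.block .retry σ δ)) ∨ (∃ σ δ, Steps A (.block .done σ δ))) := by
  constructor
  · rintro ⟨f, hf⟩
    have key : ∀ n, osize (f n) + n ≤ osize (f 0) := by
      intro n
      induction n with
      | zero => simp
      | succ n ih => have := step_mu (hf n); omega
    exact absurd (key (osize (f 0) + 1)) (by omega)
  · intro A
    exact reach (osize A) A le_rfl
end

section
/- Reduction of ongoing atomic expressions is monotone in the state: if ⟨M⟩_{σ;ε} ⇒ ⟨end⟩_{σ;δ} and σ ⊆ σ', then there exists a log δ' with ⟨M⟩_{σ';ε} ⇒ ⟨end⟩_{σ';δ'}. -/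
open Classical in
noncomputable def Expr.eval {N : Type*} :
    Expr N → Multiset N → List (Act N) → Option (List (Act N))
  | .done, _, δ => some δ
  | .retry, _, _ => none
  | .rd a M, σ, δ => if Rl δ + {a} ≤ σ then M.eval σ (δ ++ [.rd a]) else none
  | .wt a M, σ, δ => M.eval σ (δ ++ [.wt a])
  | .orElse M₁ M₂, σ, δ => (M₁.eval σ δ).or (M₂.eval σ δ)

noncomputable def Ong.eval {N : Type*} : Ong N → Option (List (Act N))
  | .block M σ δ => M.eval σ δ
  | .orElse A B => A.eval.or B.eval

theorem Step.eval_eq {N : Type*} {A A' : Ong N} (h : Step A A') : A.eval = A'.eval := by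
  induction h with
  | rdOk h => simp only [Ong.eval, Expr.eval, if_pos h]
  | rdFail h => simp only [Ong.eval, Expr.eval, if_neg h]
  | congL _ ih => simp only [Ong.eval, ih]
  | congR _ ih => simp only [Ong.eval, ih]
  | _ => rfl

namespace Steps

variable {N : Type*}

theorem eval_eq {A A' : Ong N} (h : Steps A A') : A.eval = A'.eval := by
  induction h with
  | refl => rfl
  | tail _ hs ih => exact ih.trans hs.eval_eq

theorem orElse_left {A A' : Ong N} (B : Ong N) (h : Steps A A') :
    Steps (.orElse A B) (.orElse A' B) :=
  Relation.ReflTransGen.lift (Ong.orElse · B) (fun _ _ => Step.congL) _ _ h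

end Steps

namespace Expr

variable {N : Type*}

theorem eval_isSome_mono {σ σ' : Multiset N} (hσ : σ ≤ σ') (M : Expr N) (δ : List (Act N))
    (h : (M.eval σ δ).isSome) : (M.eval σ' δ).isSome := by
  induction M generalizing δ with
  | done => rfl
  | retry => exact h
  | rd a M ih =>
    unfold eval at h ⊢
    split_ifs at h with hread
    · rw [if_pos (hread.trans hσ)]
      exact ih _ h
    · cases h
  | wt a M ih => exact ih _ h
  | orElse M₁ M₂ ih₁ ih₂ =>
    simp only [eval, Option.isSome_or, Bool.or_eq_true] at h ⊢
    exact h.imp (ih₁ δ) (ih₂ δ)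

theorem steps_retry_of_eval_eq_none {σ : Multiset N} {M : Expr N} {δ : List (Act N)}
    (h : M.eval σ δ = none) : ∃ δ', Steps (.block M σ δ) (.block .retry σ δ') := by
  induction M generalizing δ with
  | done => cases h
  | retry => exact ⟨δ, .refl⟩
  | rd a M ih =>
    unfold eval at h
    split_ifs at h with hread
    · obtain ⟨δ', hs⟩ := ih h
      exact ⟨δ', .head (.rdOk hread) hs⟩
    · exact ⟨δ, .single (.rdFail hread)⟩
  | wt a M ih =>
    obtain ⟨δ', hs⟩ := ih h
    exact ⟨δ', .head .wr hs⟩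
  | orElse M₁ M₂ ih₁ ih₂ =>
    rw [eval, Option.or_eq_none_iff] at h
    obtain ⟨δ₁, hs₁⟩ := ih₁ h.1
    obtain ⟨δ₂, hs₂⟩ := ih₂ h.2
    exact ⟨δ₂, .head .orE (((hs₁.orElse_left _).tail .orFail).trans hs₂)⟩

theorem steps_done_of_eval_eq_some {σ : Multiset N} {M : Expr N} {δ δ' : List (Act N)}
    (h : M.eval σ δ = some δ') : Steps (.block M σ δ) (.block .done σ δ') := by
  induction M generalizing δ with
  | done => cases h; exact .refl
  | retry => cases h
  | rd a M ih =>
    unfold eval at h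
    split_ifs at h with hread
    exact .head (.rdOk hread) (ih h)
  | wt a M ih => exact .head .wr (ih h)
  | orElse M₁ M₂ ih₁ ih₂ =>
    rw [eval, Option.or_eq_some_iff] at h
    refine .head .orE ?_
    rcases h with h₁ | ⟨h₁, h₂⟩
    · exact ((ih₁ h₁).orElse_left _).tail .orEnd
    · obtain ⟨δ₁, hs₁⟩ := steps_retry_of_eval_eq_none h₁
      exact ((hs₁.orElse_left _).tail .orFail).trans (ih₂ h₂)

end Expr

/-- Reduction of ongoing atomic expressions is monotone in the state. -/
theorem stmt5 {N : Type*} (M : Expr N) (σ σ' : Multiset N) (δ : List (Act N))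
    (h : Steps (.block M σ []) (.block .done σ δ)) (hσ : σ ≤ σ') :
    ∃ δ', Steps (.block M σ' []) (.block .done σ' δ') := by
  have hδ : M.eval σ [] = some δ := h.eval_eq
  obtain ⟨δ', hδ'⟩ := Option.isSome_iff_exists.mp (M.eval_isSome_mono hσ [] (by simp [hδ]))
  exact ⟨δ', Expr.steps_done_of_eval_eq_some hδ'⟩
end

section
/- For a pure sequence of actions K = α₁.….αₙ.end, the block ⟨K⟩_{σ;ε} evaluates to ⟨end⟩_{σ;δ} with R(δ) = R(K) and W(δ) = W(K) if and only if R(K) ⊆ σ; otherwise it evaluates to a retry state. -/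
/-!
Running `seq K` from `⟨seq K⟩_{σ;δ}` replays `K` onto the log, checking before each read that
the reads logged so far still fit in `σ`. Hence if `R(δ ++ K) ⊆ σ` every check passes and the run ends
with log `δ ++ K`, while otherwise the first failing check yields `retry`. Conversely, a block without
`orElse` whose log reads fit in `σ` only steps to blocks of the same kind, so any log reached at `end`
reads within `σ`.
-/

section PureSequences

variable {N : Type*}

@[simp]
lemma Rl_append (δ δ' : List (Act N)) : Rl (δ ++ δ') = Rl δ + Rl δ' := by
  induction δ with
  | nil => simp [Rl]
  | cons α δ ih => cases α <;> simp only [List.cons_append, Rl, ih, add_right_comm]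

def Expr.OrElseFree : Expr N → Prop
  | .rd _ M | .wt _ M => M.OrElseFree
  | .orElse _ _ => False
  | .done | .retry => True

lemma Expr.orElseFree_seq (K : List (Act N)) : (seq K).OrElseFree := by
  induction K with
  | nil => trivial
  | cons α K ih => cases α <;> exact ih

def Ong.IsConsistentPure : Ong N → Prop
  | .block M σ δ => M.OrElseFree ∧ Rl δ ≤ σ
  | .orElse _ _ => False

lemma Step.isConsistentPure {s t : Ong N} (h : Step s t) (hs : s.IsConsistentPure) :
    t.IsConsistentPure := by
  cases h with
  | rdOk hread => exact ⟨hs.1, by simpa [Rl] using hread⟩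
  | rdFail => exact ⟨trivial, hs.2⟩
  | wr => exact ⟨hs.1, by simpa [Rl] using hs.2⟩
  | orE => exact hs.1.elim
  | orFail | orEnd | congL | congR => exact hs.elim

lemma Steps.isConsistentPure {s t : Ong N} (h : Steps s t) (hs : s.IsConsistentPure) :
    t.IsConsistentPure := by
  induction h with
  | refl => exact hs
  | tail _ hstep ih => exact hstep.isConsistentPure ih

lemma step_pre {α : Act N} {M : Expr N} {σ : Multiset N} {δ : List (Act N)}
    (h : Rl (δ ++ [α]) ≤ σ) : Step (.block (pre α M) σ δ) (.block M σ (δ ++ [α])) := by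
  cases α with
  | rd a => exact .rdOk (by simpa [Rl] using h)
  | wt a => exact .wr

lemma steps_seq_done {σ : Multiset N} (K : List (Act N)) {δ : List (Act N)}
    (h : Rl (δ ++ K) ≤ σ) : Steps (.block (seq K) σ δ) (.block .done σ (δ ++ K)) := by
  induction K generalizing δ with
  | nil =>
    rw [List.append_nil]
    exact .refl
  | cons α K ih =>
    rw [← List.singleton_append, ← List.append_assoc] at h ⊢
    have hα : Rl (δ ++ [α]) ≤ σ :=
      le_trans (by rw [Rl_append (δ ++ [α]) K]; exact le_self_add) h
    exact .head (step_pre hα) (ih h)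

lemma steps_seq_retry {σ : Multiset N} (K : List (Act N)) {δ : List (Act N)}
    (hδ : Rl δ ≤ σ) (hK : ¬ Rl (δ ++ K) ≤ σ) :
    ∃ δ', Steps (.block (seq K) σ δ) (.block .retry σ δ') := by
  induction K generalizing δ with
  | nil => exact absurd (by simpa using hδ) hK
  | cons α K ih =>
    rw [← List.singleton_append, ← List.append_assoc] at hK
    by_cases hα : Rl (δ ++ [α]) ≤ σ
    · obtain ⟨δ', hrun⟩ := ih hα hK
      exact ⟨δ', .head (step_pre hα) hrun⟩
    · cases α with
      | rd a => exact ⟨δ, .single (.rdFail (by simpa [Rl] using hα))⟩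
      | wt a => exact absurd (by simpa [Rl] using hδ) hα

end PureSequences

/-- A pure sequence K = α₁.….αₙ.end evaluates from ⟨K⟩_{σ;ε} to an end-state whose
log has reads R(K) and writes W(K) iff R(K) ⊆ σ; otherwise it evaluates to a
retry-state. -/
theorem stmt6 {N : Type*} (K : List (Act N)) (σ : Multiset N) :
    ((∃ δ, Steps (.block (seq K) σ []) (.block .done σ δ) ∧
        Rl δ = Rl K ∧ Wl δ = Wl K) ↔ Rl K ≤ σ) ∧
    (¬ Rl K ≤ σ → ∃ δ, Steps (.block (seq K) σ []) (.block .retry σ δ)) := by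
  refine ⟨⟨fun ⟨δ, hrun, hR, _⟩ => ?_, fun h => ⟨K, ?_, rfl, rfl⟩⟩, fun h => ?_⟩
  · have hstart : (Ong.block (seq K) σ []).IsConsistentPure := ⟨Expr.orElseFree_seq K, by simp [Rl]⟩
    exact hR ▸ (hrun.isConsistentPure hstart).2
  · simpa using steps_seq_done K (δ := []) (by simpa using h)
  · exact steps_seq_retry K (δ := []) (by simp [Rl]) (by simpa using h)
end

section
/- retry is a two-sided identity for orElse up to weak atomic equivalence: retry orElse M ≈ M and M orElse retry ≈ M. -/
lemma stepsCongL {N : Type*} {A A' B : Ong N} (h : Steps A A') :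
    Steps (.orElse A B) (.orElse A' B) := by
  induction h with
  | refl => exact .refl
  | tail _ hs ih => exact ih.tail (.congL hs)

lemma total {N : Type*} (M : Expr N) : ∀ (σ : Multiset N) δ, ∃ δ',
    Steps (.block M σ δ) (.block .retry σ δ') ∨
    Steps (.block M σ δ) (.block .done σ δ') := by
  induction M with
  | done => intro σ δ; exact ⟨δ, .inr .refl⟩
  | retry => intro σ δ; exact ⟨δ, .inl .refl⟩
  | rd a M ih =>
    intro σ δ
    by_cases h : Rl δ + {a} ≤ σ
    · obtain ⟨δ', h'⟩ := ih σ (δ ++ [.rd a])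
      exact ⟨δ', h'.imp (Relation.ReflTransGen.head (Step.rdOk h))
        (Relation.ReflTransGen.head (Step.rdOk h))⟩
    · exact ⟨δ, .inl (Relation.ReflTransGen.single (Step.rdFail h))⟩
  | wt a M ih =>
    intro σ δ
    obtain ⟨δ', h'⟩ := ih σ (δ ++ [.wt a])
    exact ⟨δ', h'.imp (Relation.ReflTransGen.head Step.wr)
      (Relation.ReflTransGen.head Step.wr)⟩
  | orElse M₁ M₂ ih₁ ih₂ =>
    intro σ δ
    obtain ⟨δ₁, h₁ | h₁⟩ := ih₁ σ δ
    · obtain ⟨δ₂, h₂⟩ := ih₂ σ δ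
      refine ⟨δ₂, h₂.imp ?_ ?_⟩ <;>
        exact fun h => Relation.ReflTransGen.head Step.orE
          (((stepsCongL h₁).tail Step.orFail).trans h)
    · exact ⟨δ₁, .inr (Relation.ReflTransGen.head Step.orE
        ((stepsCongL h₁).tail Step.orEnd))⟩

/-- retry is a two-sided identity for orElse up to weak atomic equivalence. -/
theorem stmt13 {N : Type*} [DecidableEq N] (M : Expr N) :
    AEq (.orElse .retry M) M ∧ AEq (.orElse M .retry) M := by
  constructor
  · intro σ
    obtain ⟨δ, h | h⟩ := total M σ []
    · exact .inl ⟨⟨δ, Relation.ReflTransGen.head Step.orE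
        (Relation.ReflTransGen.head Step.orFail h)⟩, ⟨δ, h⟩⟩
    · exact .inr ⟨δ, δ, Relation.ReflTransGen.head Step.orE
        (Relation.ReflTransGen.head Step.orFail h), h, rfl⟩
  · intro σ
    obtain ⟨δ, h | h⟩ := total M σ []
    · exact .inl ⟨⟨[], Relation.ReflTransGen.head Step.orE
        ((stepsCongL h).tail Step.orFail)⟩, ⟨δ, h⟩⟩
    · exact .inr ⟨δ, δ, Relation.ReflTransGen.head Step.orE
        ((stepsCongL h).tail Step.orEnd), h, rfl⟩
end

section
/- orElse is not commutative up to weak atomic equivalence: there exist atomic expressions M, N with M orElse N ≉ N orElse M. In particular rd(a).wt(b).end orElse end ≉ end, while end orElse rd(a).wt(b).end ≈ end. -/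
section Aux
variable {N : Type*} [DecidableEq N]

lemma steps_done {σ : Multiset N} {δ : List (Act N)} {E : Ong N}
    (h : Steps (.block .done σ δ) E) : E = .block .done σ δ := by
  rcases h.cases_head with rfl | ⟨c, hc, _⟩
  · rfl
  · cases hc

lemma reach1 (a b : N) {E : Ong N}
    (h : Steps (.block (.orElse (.rd a (.wt b .done)) .done) {a} []) E) :
    E = .block (.orElse (.rd a (.wt b .done)) .done) {a} [] ∨
    E = .orElse (.block (.rd a (.wt b .done)) {a} []) (.block .done {a} []) ∨
    E = .orElse (.block (.wt b .done) {a} [.rd a]) (.block .done {a} []) ∨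
    E = .orElse (.block .done {a} [.rd a, .wt b]) (.block .done {a} []) ∨
    E = .block .done {a} [.rd a, .wt b] := by
  induction h with
  | refl => left; rfl
  | tail hsteps hstep ih =>
    rcases ih with rfl | rfl | rfl | rfl | rfl
    · cases hstep
      right; left; rfl
    · cases hstep with
      | congL h =>
        cases h with
        | rdOk h => right; right; left; rfl
        | rdFail h => exact absurd (by simp [Rl]) h
      | congR h => cases h
    · cases hstep with
      | congL h => cases h; right; right; right; left; rfl
      | congR h => cases h
    · cases hstep with
      | orEnd => right; right; right; right; rfl
      | congL h => cases h
      | congR h => cases h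
    · cases hstep

lemma reach2 (a b : N) {E : Ong N}
    (h : Steps (.block (.orElse .done (.rd a (.wt b .done))) {a} []) E) :
    E = .block (.orElse .done (.rd a (.wt b .done))) {a} [] ∨
    E = .orElse (.block .done {a} []) (.block (.rd a (.wt b .done)) {a} []) ∨
    E = .orElse (.block .done {a} []) (.block (.wt b .done) {a} [.rd a]) ∨
    E = .orElse (.block .done {a} []) (.block .done {a} [.rd a, .wt b]) ∨
    E = .block .done {a} [] := by
  induction h with
  | refl => left; rfl
  | tail hsteps hstep ih =>
    rcases ih with rfl | rfl | rfl | rfl | rfl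
    · cases hstep
      right; left; rfl
    · cases hstep with
      | orEnd => right; right; right; right; rfl
      | congL h => cases h
      | congR h =>
        cases h with
        | rdOk h => right; right; left; rfl
        | rdFail h => exact absurd (by simp [Rl]) h
    · cases hstep with
      | orEnd => right; right; right; right; rfl
      | congL h => cases h
      | congR h => cases h; right; right; right; left; rfl
    · cases hstep with
      | orEnd => right; right; right; right; rfl
      | congL h => cases h
      | congR h => cases h
    · cases hstep

end Aux

/-- orElse is not commutative up to weak atomic equivalence: in particular
rd(a).wt(b).end orElse end ≉ end while end orElse rd(a).wt(b).end ≈ end. -/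
theorem stmt15 {N : Type*} [DecidableEq N] (a b : N) (hab : a ≠ b) :
    (∃ M M' : Expr N, ¬ AEq (.orElse M M') (.orElse M' M)) ∧
    ¬ AEq (.orElse (.rd a (.wt b .done)) .done) .done ∧
    AEq (.orElse .done (.rd a (.wt b .done))) .done := by
  have heffFalse : ¬ EffEq ({a} : Multiset N) [.rd a, .wt b] [] := by
    intro heff
    simp [EffEq, Rl, Wl] at heff
    exact hab heff.symm
  refine ⟨⟨.rd a (.wt b .done), .done, ?_⟩, ?_, ?_⟩
  · intro h
    rcases h {a} with ⟨⟨δ, hret⟩, -⟩ | ⟨δ, δ', h1, h2, heff⟩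
    · rcases reach1 a b hret with h|h|h|h|h <;> simp at h
    · rcases reach1 a b h1 with h|h|h|h|h <;> simp at h
      obtain ⟨rfl⟩ := h
      rcases reach2 a b h2 with h|h|h|h|h <;> simp at h
      obtain ⟨rfl⟩ := h
      exact heffFalse heff
  · intro h
    rcases h {a} with ⟨⟨δ, hret⟩, -⟩ | ⟨δ, δ', h1, h2, heff⟩
    · rcases reach1 a b hret with h|h|h|h|h <;> simp at h
    · rcases reach1 a b h1 with h|h|h|h|h <;> simp at h
      obtain ⟨rfl⟩ := h
      have := steps_done h2
      simp at this
      obtain ⟨rfl⟩ := this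
      exact heffFalse heff
  · intro σ
    right
    exact ⟨[], [], Relation.ReflTransGen.head Step.orE
      (Relation.ReflTransGen.single Step.orEnd), Relation.ReflTransGen.refl, rfl⟩
end
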